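/- arXiv:1106.5130 — 2 statements merged into one kernel-verified Lean document; each statement's English description precedes it below -/
import Mathlib

section
/- For every c ∈ [0, 1], the set Γ(c) of probability distributions over the positive integers with critical exponent equal to c is convex: if P, Q ∈ Γ(c) and λ ∈ (0, 1), then the mixture λP + (1−λ)Q also has critical exponent c. -/
open Filter Topology
open scoped ENNReal

/-- A probability distribution over the positive integers (indexed by `ℕ`):
nonnegative masses summing to `1`. -/
def IsProbDist (p : ℕ → ℝ) : Prop :=
  (∀ n, 0 ≤ p n) ∧ HasSum p 1

/-- The sum `∑ pₙ^α`, computed in `[0,∞]`, with the convention `0^0 = 0`. -/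
noncomputable def renyiSum (p : ℕ → ℝ) (α : ℝ) : ℝ≥0∞ :=
  ∑' n, if p n = 0 then 0 else ENNReal.ofReal (p n ^ α)

/-- The Shannon entropy `H₁(P) = -∑ pₙ log pₙ`, valued in `[0,∞]`. -/
noncomputable def shannonEntropy (p : ℕ → ℝ) : ℝ≥0∞ :=
  ∑' n, ENNReal.ofReal (-(p n * Real.log (p n)))

/-- The Rényi entropy `H_α(P)`, valued in `[0,∞]`: for `α ≠ 1` it is
`(1/(1-α)) log ∑ pₙ^α` (equal to `∞` when the sum diverges), and for `α = 1`
it is the Shannon entropy. -/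
noncomputable def renyiEntropy (p : ℕ → ℝ) (α : ℝ) : ℝ≥0∞ :=
  if α = 1 then shannonEntropy p
  else if renyiSum p α = ∞ then ∞
  else ENNReal.ofReal ((1 - α)⁻¹ * Real.log (renyiSum p α).toReal)

/-- The region of convergence `R(P) = {α ≥ 0 : H_α(P) < ∞}`. -/
def convRegion (p : ℕ → ℝ) : Set ℝ :=
  {α : ℝ | 0 ≤ α ∧ renyiEntropy p α < ∞}

/-- The critical exponent `α_c(P) = inf {α ≥ 0 : H_α(P) < ∞}`. -/
noncomputable def criticalExponent (p : ℕ → ℝ) : ℝ :=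
  sInf (convRegion p)

/-- The total variation distance `d_TV(P,Q) = ∑ |pₙ - qₙ|`. -/
noncomputable def dTV (p q : ℕ → ℝ) : ℝ :=
  ∑' n, |p n - q n|


/-!
A mixture `m = λP + (1-λ)Q` satisfies `pₙ ≤ λ⁻¹ mₙ`, `qₙ ≤ (1-λ)⁻¹ mₙ` and
`mₙ ≤ max pₙ qₙ`, so `∑ mₙ^α` is finite exactly when both `∑ pₙ^α` and `∑ qₙ^α` are.
For a probability distribution the set of `α ≥ 0` with `∑ pₙ^α < ∞` is an up-set
containing `1` (masses are at most `1`), and it has the same infimum as the convergence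
region, which may differ from it only at `α = 1`. The infimum of the intersection of two
up-sets is the larger of the two infima, here `max c c = c`.
-/

theorem csInf_inter_of_isUpperSet {α : Type*} [ConditionallyCompleteLinearOrder α]
    {A B : Set α} (hA : IsUpperSet A) (hB : IsUpperSet B) (hAne : A.Nonempty)
    (hBne : B.Nonempty) (hAbdd : BddBelow A) (hBbdd : BddBelow B) :
    sInf (A ∩ B) = max (sInf A) (sInf B) := by
  have max_mem {a b : α} (ha : a ∈ A) (hb : b ∈ B) : max a b ∈ A ∩ B :=
    ⟨hA (le_max_left a b) ha, hB (le_max_right a b) hb⟩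
  obtain ⟨a₀, ha₀⟩ := hAne
  obtain ⟨b₀, hb₀⟩ := hBne
  have hne : (A ∩ B).Nonempty := ⟨_, max_mem ha₀ hb₀⟩
  refine le_antisymm ?_ (max_le (csInf_le_csInf hAbdd hne Set.inter_subset_left)
    (csInf_le_csInf hBbdd hne Set.inter_subset_right))
  by_contra! h
  obtain ⟨a, ha, hlt_a⟩ := exists_lt_of_csInf_lt ⟨a₀, ha₀⟩ (le_max_left _ _ |>.trans_lt h)
  obtain ⟨b, hb, hlt_b⟩ := exists_lt_of_csInf_lt ⟨b₀, hb₀⟩ (le_max_right _ _ |>.trans_lt h)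
  exact (csInf_le (hAbdd.mono Set.inter_subset_left) (max_mem ha hb)).not_gt
    (max_lt hlt_a hlt_b)

noncomputable def renyiTerm (x α : ℝ) : ℝ≥0∞ :=
  if x = 0 then 0 else ENNReal.ofReal (x ^ α)

theorem renyiSum_eq_tsum_renyiTerm (p : ℕ → ℝ) (α : ℝ) :
    renyiSum p α = ∑' n, renyiTerm (p n) α :=
  rfl

section renyiTerm

variable {x y α β : ℝ}

theorem renyiTerm_mono_left (hx : 0 ≤ x) (hxy : x ≤ y) (hα : 0 ≤ α) :
    renyiTerm x α ≤ renyiTerm y α := by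
  rcases hx.eq_or_lt with rfl | hx
  · simp [renyiTerm]
  · rw [renyiTerm, renyiTerm, if_neg hx.ne', if_neg (hx.trans_le hxy).ne']
    exact ENNReal.ofReal_le_ofReal (Real.rpow_le_rpow hx.le hxy hα)

theorem renyiTerm_anti_right (hx : 0 ≤ x) (hx1 : x ≤ 1) (hαβ : α ≤ β) :
    renyiTerm x β ≤ renyiTerm x α := by
  rcases hx.eq_or_lt with rfl | hx
  · simp [renyiTerm]
  · rw [renyiTerm, renyiTerm, if_neg hx.ne', if_neg hx.ne']
    exact ENNReal.ofReal_le_ofReal (Real.rpow_le_rpow_of_exponent_ge hx hx1 hαβ)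

theorem renyiTerm_mul {C : ℝ} (hC : 0 < C) (hy : 0 ≤ y) :
    renyiTerm (C * y) α = ENNReal.ofReal (C ^ α) * renyiTerm y α := by
  rcases hy.eq_or_lt with rfl | hy
  · simp [renyiTerm]
  · rw [renyiTerm, renyiTerm, if_neg (mul_pos hC hy).ne', if_neg hy.ne',
      Real.mul_rpow hC.le hy.le, ENNReal.ofReal_mul (by positivity)]

theorem renyiTerm_one (hx : 0 ≤ x) : renyiTerm x 1 = ENNReal.ofReal x := by
  rcases hx.eq_or_lt with rfl | hx
  · simp [renyiTerm]
  · rw [renyiTerm, if_neg hx.ne', Real.rpow_one]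

end renyiTerm

section renyiSum

variable {a b p q : ℕ → ℝ} {α β : ℝ}

theorem renyiSum_mono_left (ha : ∀ n, 0 ≤ a n) (hab : ∀ n, a n ≤ b n) (hα : 0 ≤ α) :
    renyiSum a α ≤ renyiSum b α :=
  ENNReal.tsum_le_tsum fun n => renyiTerm_mono_left (ha n) (hab n) hα

theorem renyiSum_anti_right (hp0 : ∀ n, 0 ≤ p n) (hp1 : ∀ n, p n ≤ 1) (hαβ : α ≤ β) :
    renyiSum p β ≤ renyiSum p α :=
  ENNReal.tsum_le_tsum fun n => renyiTerm_anti_right (hp0 n) (hp1 n) hαβ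

theorem renyiSum_const_mul {C : ℝ} (hC : 0 < C) (hb : ∀ n, 0 ≤ b n) :
    renyiSum (fun n => C * b n) α = ENNReal.ofReal (C ^ α) * renyiSum b α := by
  simp only [renyiSum_eq_tsum_renyiTerm, renyiTerm_mul hC (hb _), ENNReal.tsum_mul_left]

theorem renyiSum_le_of_le_const_mul {C : ℝ} (hC : 0 < C) (hα : 0 ≤ α)
    (ha : ∀ n, 0 ≤ a n) (hab : ∀ n, a n ≤ C * b n) :
    renyiSum a α ≤ ENNReal.ofReal (C ^ α) * renyiSum b α := by
  have hb (n : ℕ) : 0 ≤ b n := nonneg_of_mul_nonneg_right ((ha n).trans (hab n)) hC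
  exact (renyiSum_mono_left ha hab hα).trans_eq (renyiSum_const_mul hC hb)

theorem renyiSum_le_add_of_le_max (ha : ∀ n, 0 ≤ a n) (hα : 0 ≤ α)
    (habq : ∀ n, a n ≤ max (p n) (q n)) :
    renyiSum a α ≤ renyiSum p α + renyiSum q α := by
  rw [renyiSum_eq_tsum_renyiTerm, renyiSum_eq_tsum_renyiTerm, renyiSum_eq_tsum_renyiTerm,
    ← ENNReal.tsum_add]
  refine ENNReal.tsum_le_tsum fun n => ?_
  rcases le_max_iff.mp (habq n) with h | h
  · exact (renyiTerm_mono_left (ha n) h hα).trans le_self_add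
  · exact (renyiTerm_mono_left (ha n) h hα).trans le_add_self

end renyiSum

theorem IsProbDist.le_one {p : ℕ → ℝ} (hp : IsProbDist p) (n : ℕ) : p n ≤ 1 :=
  le_hasSum hp.2 n fun j _ => hp.1 j

theorem IsProbDist.renyiSum_one {p : ℕ → ℝ} (hp : IsProbDist p) : renyiSum p 1 = 1 := by
  rw [renyiSum_eq_tsum_renyiTerm]
  simp only [renyiTerm_one (hp.1 _)]
  rw [← ENNReal.ofReal_tsum_of_nonneg hp.1 hp.2.summable, hp.2.tsum_eq, ENNReal.ofReal_one]

theorem IsProbDist.mix {p q : ℕ → ℝ} (hp : IsProbDist p) (hq : IsProbDist q) {lam : ℝ}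
    (hlam0 : 0 ≤ lam) (hlam1 : lam ≤ 1) :
    IsProbDist fun n => lam * p n + (1 - lam) * q n := by
  refine ⟨fun n => ?_, ?_⟩
  · have := hp.1 n; have := hq.1 n; have : 0 ≤ 1 - lam := by linarith
    positivity
  · simpa using (hp.2.mul_left lam).add (hq.2.mul_left (1 - lam))

theorem renyiSum_mix_ne_top_iff {p q : ℕ → ℝ} (hp : ∀ n, 0 ≤ p n) (hq : ∀ n, 0 ≤ q n)
    {lam : ℝ} (hlam0 : 0 < lam) (hlam1 : lam < 1) {α : ℝ} (hα : 0 ≤ α) :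
    renyiSum (fun n => lam * p n + (1 - lam) * q n) α ≠ ∞ ↔
      renyiSum p α ≠ ∞ ∧ renyiSum q α ≠ ∞ := by
  have hlam1' : 0 < 1 - lam := by linarith
  refine ⟨fun h => ⟨?_, ?_⟩, fun ⟨hpα, hqα⟩ => ?_⟩
  · refine ne_top_of_le_ne_top (ENNReal.mul_ne_top ENNReal.ofReal_ne_top h)
      (renyiSum_le_of_le_const_mul (inv_pos.mpr hlam0) hα hp fun n => ?_)
    rw [le_inv_mul_iff₀ hlam0]
    nlinarith [hq n]
  · refine ne_top_of_le_ne_top (ENNReal.mul_ne_top ENNReal.ofReal_ne_top h)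
      (renyiSum_le_of_le_const_mul (inv_pos.mpr hlam1') hα hq fun n => ?_)
    rw [le_inv_mul_iff₀ hlam1']
    nlinarith [hp n]
  · refine ne_top_of_le_ne_top (ENNReal.add_ne_top.mpr ⟨hpα, hqα⟩)
      (renyiSum_le_add_of_le_max (fun n => ?_) hα fun n => ?_)
    · have := hp n; have := hq n; positivity
    · rcases le_total (p n) (q n) with h | h
      · rw [max_eq_right h]; nlinarith
      · rw [max_eq_left h]; nlinarith

def renyiSumRegion (p : ℕ → ℝ) : Set ℝ :=
  {α : ℝ | 0 ≤ α ∧ renyiSum p α ≠ ∞}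

theorem renyiSumRegion_mix {p q : ℕ → ℝ} (hp : ∀ n, 0 ≤ p n) (hq : ∀ n, 0 ≤ q n)
    {lam : ℝ} (hlam0 : 0 < lam) (hlam1 : lam < 1) :
    renyiSumRegion (fun n => lam * p n + (1 - lam) * q n) =
      renyiSumRegion p ∩ renyiSumRegion q := by
  ext α
  simp only [renyiSumRegion, Set.mem_inter_iff, Set.mem_ofPred_eq]
  constructor
  · rintro ⟨hα, h⟩
    obtain ⟨hpα, hqα⟩ := (renyiSum_mix_ne_top_iff hp hq hlam0 hlam1 hα).mp h
    exact ⟨⟨hα, hpα⟩, hα, hqα⟩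
  · rintro ⟨⟨hα, hpα⟩, -, hqα⟩
    exact ⟨hα, (renyiSum_mix_ne_top_iff hp hq hlam0 hlam1 hα).mpr ⟨hpα, hqα⟩⟩

theorem bddBelow_renyiSumRegion (p : ℕ → ℝ) : BddBelow (renyiSumRegion p) :=
  ⟨0, fun _ h => h.1⟩

theorem isUpperSet_renyiSumRegion {p : ℕ → ℝ} (hp0 : ∀ n, 0 ≤ p n) (hp1 : ∀ n, p n ≤ 1) :
    IsUpperSet (renyiSumRegion p) := fun _ _ hαβ ⟨hα, h⟩ =>
  ⟨hα.trans hαβ, ne_top_of_le_ne_top h (renyiSum_anti_right hp0 hp1 hαβ)⟩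

theorem IsProbDist.mem_renyiSumRegion {p : ℕ → ℝ} (hp : IsProbDist p) {α : ℝ} (hα : 1 ≤ α) :
    α ∈ renyiSumRegion p :=
  isUpperSet_renyiSumRegion hp.1 hp.le_one hα
    ⟨zero_le_one, by rw [hp.renyiSum_one]; exact ENNReal.one_ne_top⟩

theorem mem_convRegion_iff_of_ne_one {p : ℕ → ℝ} {α : ℝ} (hα : α ≠ 1) :
    α ∈ convRegion p ↔ α ∈ renyiSumRegion p := by
  simp only [convRegion, renyiSumRegion, Set.mem_ofPred_eq, renyiEntropy, if_neg hα]
  refine and_congr_right fun _ => ⟨fun h htop => ?_, fun h => ?_⟩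
  · simp [htop] at h
  · rw [if_neg h]; exact ENNReal.ofReal_lt_top

theorem IsProbDist.criticalExponent_eq {p : ℕ → ℝ} (hp : IsProbDist p) :
    criticalExponent p = sInf (renyiSumRegion p) := by
  have hconv_of_one_lt {β : ℝ} (hβ : 1 < β) : β ∈ convRegion p :=
    (mem_convRegion_iff_of_ne_one hβ.ne').mpr (hp.mem_renyiSumRegion hβ.le)
  have hsubset : convRegion p ⊆ renyiSumRegion p := fun α hα => by
    rcases eq_or_ne α 1 with rfl | hα1
    · exact hp.mem_renyiSumRegion le_rfl
    · exact (mem_convRegion_iff_of_ne_one hα1).mp hα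
  have hbdd : BddBelow (convRegion p) := ⟨0, fun _ h => h.1⟩
  refine le_antisymm (le_csInf ⟨1, hp.mem_renyiSumRegion le_rfl⟩ fun α hα => ?_)
    (csInf_le_csInf (bddBelow_renyiSumRegion p) ⟨2, hconv_of_one_lt one_lt_two⟩ hsubset)
  rcases eq_or_ne α 1 with rfl | hα1
  -- `H₁` may be infinite, but every `β > 1` lies in the convergence region.
  · exact le_of_forall_gt_imp_ge_of_dense fun β hβ => csInf_le hbdd (hconv_of_one_lt hβ)
  · exact csInf_le hbdd ((mem_convRegion_iff_of_ne_one hα1).mpr hα)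

theorem stmt10_general (c : ℝ)
    (p q : ℕ → ℝ) (hp : IsProbDist p) (hq : IsProbDist q)
    (hpc : criticalExponent p = c) (hqc : criticalExponent q = c)
    (lam : ℝ) (hlam0 : 0 < lam) (hlam1 : lam < 1) :
    criticalExponent (fun n => lam * p n + (1 - lam) * q n) = c := by
  rw [(hp.mix hq hlam0.le hlam1.le).criticalExponent_eq,
    renyiSumRegion_mix hp.1 hq.1 hlam0 hlam1,
    csInf_inter_of_isUpperSet (isUpperSet_renyiSumRegion hp.1 hp.le_one)
      (isUpperSet_renyiSumRegion hq.1 hq.le_one) ⟨1, hp.mem_renyiSumRegion le_rfl⟩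
      ⟨1, hq.mem_renyiSumRegion le_rfl⟩ (bddBelow_renyiSumRegion p)
      (bddBelow_renyiSumRegion q),
    ← hp.criticalExponent_eq, ← hq.criticalExponent_eq, hpc, hqc, max_self]

/-- For every `c ∈ [0,1]`, the set `Γ(c)` is convex: a mixture
`λP + (1-λ)Q` of two distributions with critical exponent `c` again has
critical exponent `c`. -/
theorem stmt10 (c : ℝ) (hc0 : 0 ≤ c) (hc1 : c ≤ 1)
    (p q : ℕ → ℝ) (hp : IsProbDist p) (hq : IsProbDist q)
    (hpc : criticalExponent p = c) (hqc : criticalExponent q = c)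
    (lam : ℝ) (hlam0 : 0 < lam) (hlam1 : lam < 1) :
    criticalExponent (fun n => lam * p n + (1 - lam) * q n) = c :=
  stmt10_general c p q hp hq hpc hqc lam hlam0 hlam1
end

section
/- Let P be a probability distribution over the positive integers. Then lim_{α→1+} H_α(P) = H_1(P), where both sides may be infinite (i.e. if the Shannon entropy H_1(P) = ∞ then H_α(P) → ∞ as α → 1+). Moreover, if α_c(P) < 1, then also lim_{α→1−} H_α(P) = H_1(P), so that lim_{α→1} H_α(P) = H_1(P). -/
open Filter Topology
open scoped ENNReal

/-!
Write `S(α) = ∑ pₙ^α` and `Φ(α) = ∑ (pₙ - pₙ^α)/(α - 1) = (1 - S(α))/(α - 1)`. Since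
`1 - 1/S ≤ log S ≤ S - 1`, the entropy `H_α = log S(α)/(1 - α)` lies between `Φ(α)` and
`Φ(α)/S(α)`, and `S(α) → 1` by dominated convergence, so it suffices that `Φ(α) → H₁`.
The `n`-th term of `Φ` is minus the secant slope at `1` of the convex function `α ↦ pₙ^α`, so it
is antitone in `α` and tends to `-pₙ log pₙ`. For `α ↓ 1` each term stays below its limit, so
`Φ(α) → H₁` in `[0, ∞]` even when `H₁ = ∞`. For `α ↑ 1` the terms are dominated by those at any
`β < 1` with `S(β) < ∞`, and such a `β` exists when `α_c < 1`.
-/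

open Real

-- Unlike `Real.rpow`, which has `0 ^ 0 = 1`, this follows the convention `0 ^ 0 = 0`.
noncomputable def massPow (x α : ℝ) : ℝ := if x = 0 then 0 else x ^ α

noncomputable def entropySlope (x α : ℝ) : ℝ := (x - massPow x α) / (α - 1)

section massPow

variable {x α β : ℝ}

lemma massPow_of_pos (hx : 0 < x) (α : ℝ) : massPow x α = x ^ α := if_neg hx.ne'

@[simp] lemma massPow_zero_left (α : ℝ) : massPow 0 α = 0 := if_pos rfl

@[simp] lemma massPow_one_right (x : ℝ) : massPow x 1 = x := by
  unfold massPow; split_ifs with h <;> simp [h]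

lemma massPow_nonneg (hx : 0 ≤ x) (α : ℝ) : 0 ≤ massPow x α := by
  unfold massPow; split_ifs
  · exact le_rfl
  · exact rpow_nonneg hx α

lemma massPow_le_massPow_of_le (hx0 : 0 ≤ x) (hx1 : x ≤ 1) (h : β ≤ α) :
    massPow x α ≤ massPow x β := by
  rcases hx0.eq_or_lt with rfl | hx
  · simp
  · rw [massPow_of_pos hx, massPow_of_pos hx]
    exact rpow_le_rpow_of_exponent_ge hx hx1 h

lemma convexOn_massPow (hx : 0 ≤ x) : ConvexOn ℝ Set.univ (massPow x) := by
  rcases hx.eq_or_lt with rfl | hx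
  · exact (convexOn_const (0 : ℝ) convex_univ).congr fun α _ => (massPow_zero_left α).symm
  · simpa [funext (massPow_of_pos hx)] using convexOn_rpow_left hx

lemma hasDerivAt_massPow (hx : 0 ≤ x) : HasDerivAt (massPow x) (x * log x) 1 := by
  rcases hx.eq_or_lt with rfl | hx
  · simpa [funext massPow_zero_left] using hasDerivAt_const (1 : ℝ) (0 : ℝ)
  · simpa [funext (massPow_of_pos hx)] using (hasStrictDerivAt_const_rpow hx 1).hasDerivAt

lemma add_mul_mul_log_le_massPow (hx : 0 ≤ x) (α : ℝ) :
    x + (α - 1) * (x * log x) ≤ massPow x α := by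
  rcases hx.eq_or_lt with rfl | hx
  · simp
  · calc x + (α - 1) * (x * log x) = x * ((α - 1) * log x + 1) := by ring
      _ ≤ x * exp ((α - 1) * log x) := by gcongr; exact add_one_le_exp _
      _ = massPow x α := by
        rw [massPow_of_pos hx, rpow_def_of_pos hx, mul_comm (log x), sub_one_mul, exp_sub,
          exp_log hx, mul_div_cancel₀ _ hx.ne']

lemma tendsto_entropySlope (hx : 0 ≤ x) :
    Tendsto (entropySlope x) (𝓝[≠] 1) (𝓝 (negMulLog x)) := by
  have := (hasDerivAt_massPow hx).tendsto_slope.neg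
  refine this.congr' (Eventually.of_forall fun α => ?_) |>.trans (by simp [negMulLog])
  rw [entropySlope, slope_def_field, massPow_one_right, ← neg_div, neg_sub]

lemma antitoneOn_entropySlope (hx : 0 ≤ x) : AntitoneOn (entropySlope x) {1}ᶜ := by
  intro β hβ α hα hβα
  have := (convexOn_massPow hx).secant_mono (a := 1) trivial trivial trivial hβ hα hβα
  rw [massPow_one_right] at this
  simp only [entropySlope, ← neg_sub (massPow x _), neg_div]
  linarith

lemma entropySlope_le_negMulLog (hx : 0 ≤ x) (hα : 1 < α) : entropySlope x α ≤ negMulLog x := by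
  rw [entropySlope, div_le_iff₀ (sub_pos.2 hα), negMulLog]
  linarith [add_mul_mul_log_le_massPow hx α]

lemma negMulLog_le_entropySlope (hx : 0 ≤ x) (hα : α < 1) : negMulLog x ≤ entropySlope x α := by
  rw [entropySlope, le_div_iff_of_neg (sub_neg.2 hα), negMulLog]
  linarith [add_mul_mul_log_le_massPow hx α]

lemma entropySlope_nonneg (hx0 : 0 ≤ x) (hx1 : x ≤ 1) (hα : α ≠ 1) : 0 ≤ entropySlope x α := by
  rcases hα.lt_or_gt with hα | hα
  · exact (negMulLog_nonneg hx0 hx1).trans (negMulLog_le_entropySlope hx0 hα)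
  · refine div_nonneg (sub_nonneg.2 ?_) (sub_nonneg.2 hα.le)
    simpa using massPow_le_massPow_of_le hx0 hx1 hα.le

end massPow

lemma log_div_one_sub_mem_uIcc {S : ℝ} (hS : 0 < S) (α : ℝ) :
    log S / (1 - α) ∈ Set.uIcc ((1 - S) / (α - 1)) ((1 - S) / (α - 1) / S) := by
  have hup := log_le_sub_one_of_pos hS
  have hlow := one_sub_inv_le_log_of_pos hS
  have h₁ : (1 - S) / (α - 1) = (S - 1) / (1 - α) := by
    rw [← neg_sub S 1, ← neg_sub 1 α, neg_div_neg_eq]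
  have h₂ : (1 - S) / (α - 1) / S = (1 - S⁻¹) / (1 - α) := by
    rw [h₁, div_right_comm, sub_div, div_self hS.ne', one_div]
  rw [h₂, h₁]
  rcases lt_trichotomy α 1 with hα | rfl | hα
  · exact Set.mem_uIcc.2 (Or.inr ⟨div_le_div_of_nonneg_right hlow (by linarith),
      div_le_div_of_nonneg_right hup (by linarith)⟩)
  · simp
  · exact Set.mem_uIcc.2 (Or.inl ⟨div_le_div_of_nonpos_of_le (by linarith) hup,
      div_le_div_of_nonpos_of_le (by linarith) hlow⟩)

lemma ENNReal.tendsto_tsum_of_tendsto_of_le {ι κ : Type*} {l : Filter ι} {f : ι → κ → ℝ≥0∞}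
    {g : κ → ℝ≥0∞} (hf : ∀ k, Tendsto (f · k) l (𝓝 (g k))) (hle : ∀ᶠ i in l, ∀ k, f i k ≤ g k) :
    Tendsto (fun i => ∑' k, f i k) l (𝓝 (∑' k, g k)) := by
  refine tendsto_order.2 ⟨fun c hc => ?_, fun c hc => ?_⟩
  · rw [ENNReal.tsum_eq_iSup_sum, lt_iSup_iff] at hc
    obtain ⟨s, hs⟩ := hc
    filter_upwards [(tendsto_finsetSum s fun k _ => hf k).eventually_const_lt hs] with i hi
    exact hi.trans_le (ENNReal.sum_le_tsum s)
  · filter_upwards [hle] with i hi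
    exact (ENNReal.tsum_le_tsum hi).trans_lt hc

lemma ENNReal.tendsto_ofReal_div_of_tendsto_one {ι : Type*} {l : Filter ι} {f g : ι → ℝ}
    {L : ℝ≥0∞} (hf : Tendsto (fun i => ENNReal.ofReal (f i)) l (𝓝 L)) (hg : Tendsto g l (𝓝 1)) :
    Tendsto (fun i => ENNReal.ofReal (f i / g i)) l (𝓝 L) := by
  have hg' : Tendsto (fun i => ENNReal.ofReal (g i)) l (𝓝 1) := by
    simpa only [ENNReal.ofReal_one] using ENNReal.tendsto_ofReal hg
  have := ENNReal.Tendsto.div hf (Or.inr one_ne_zero) hg' (Or.inl ENNReal.one_ne_top)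
  rw [div_one] at this
  refine this.congr' ?_
  filter_upwards [hg.eventually_const_lt one_pos] with i hi
  exact (ENNReal.ofReal_div_of_pos hi).symm

lemma renyiSum_eq_tsum (p : ℕ → ℝ) (α : ℝ) :
    renyiSum p α = ∑' n, ENNReal.ofReal (massPow (p n) α) := by
  unfold renyiSum massPow
  congr! 2 with n
  split_ifs <;> simp

lemma shannonEntropy_eq_tsum (p : ℕ → ℝ) :
    shannonEntropy p = ∑' n, ENNReal.ofReal (negMulLog (p n)) := by
  simp only [shannonEntropy, negMulLog, neg_mul]

lemma renyiSum_ne_top_iff {p : ℕ → ℝ} (hp : ∀ n, 0 ≤ p n) {α : ℝ} :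
    renyiSum p α ≠ ∞ ↔ Summable fun n => massPow (p n) α := by
  rw [renyiSum_eq_tsum]
  refine ⟨fun h => ?_, fun h => ?_⟩
  · simpa [ENNReal.toReal_ofReal (massPow_nonneg (hp _) α)] using ENNReal.summable_toReal h
  · rw [← ENNReal.ofReal_tsum_of_nonneg (fun n => massPow_nonneg (hp n) α) h]
    exact ENNReal.ofReal_ne_top

lemma renyiEntropy_lt_top_iff {p : ℕ → ℝ} {α : ℝ} (hα : α ≠ 1) :
    renyiEntropy p α < ∞ ↔ renyiSum p α ≠ ∞ := by
  unfold renyiEntropy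
  rw [if_neg hα]
  split_ifs with h <;> simp [h]

lemma renyiEntropy_eq_ofReal {p : ℕ → ℝ} (hp : ∀ n, 0 ≤ p n) {α : ℝ} (hα : α ≠ 1)
    (hs : Summable fun n => massPow (p n) α) :
    renyiEntropy p α = ENNReal.ofReal (log (∑' n, massPow (p n) α) / (1 - α)) := by
  have hsum := ENNReal.ofReal_tsum_of_nonneg (fun n => massPow_nonneg (hp n) α) hs
  rw [renyiEntropy, if_neg hα, if_neg ((renyiSum_ne_top_iff hp).2 hs), renyiSum_eq_tsum, ← hsum,
    ENNReal.toReal_ofReal (tsum_nonneg fun n => massPow_nonneg (hp n) α), inv_mul_eq_div]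

namespace IsProbDist

variable {p : ℕ → ℝ} {α β : ℝ}

lemma le_one_s16 (hp : IsProbDist p) (n : ℕ) : p n ≤ 1 :=
  le_hasSum hp.2 n fun m _ => hp.1 m

lemma exists_pos (hp : IsProbDist p) : ∃ n, 0 < p n := by
  by_contra! h
  have hzero : p = 0 := funext fun n => le_antisymm (h n) (hp.1 n)
  exact one_ne_zero (hp.2.unique (hzero ▸ hasSum_zero))

lemma summable_massPow_of_le (hp : IsProbDist p) (hβ : Summable fun n => massPow (p n) β)
    (h : β ≤ α) : Summable fun n => massPow (p n) α :=
  hβ.of_nonneg_of_le (fun n => massPow_nonneg (hp.1 n) α)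
    fun n => massPow_le_massPow_of_le (hp.1 n) (hp.le_one_s16 n) h

lemma summable_massPow_one (hp : IsProbDist p) : Summable fun n => massPow (p n) 1 := by
  simpa using hp.2.summable

lemma tsum_massPow_pos (hp : IsProbDist p) (hs : Summable fun n => massPow (p n) α) :
    0 < ∑' n, massPow (p n) α := by
  obtain ⟨m, hm⟩ := hp.exists_pos
  exact hs.tsum_pos (fun n => massPow_nonneg (hp.1 n) α) m
    (by rw [massPow_of_pos hm]; exact rpow_pos_of_pos hm α)

lemma hasSum_entropySlope (hp : IsProbDist p) (hs : Summable fun n => massPow (p n) α) :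
    HasSum (fun n => entropySlope (p n) α) ((1 - ∑' n, massPow (p n) α) / (α - 1)) :=
  (hp.2.sub hs.hasSum).div_const _

lemma tendsto_tsum_massPow (hp : IsProbDist p) {l : Filter ℝ} (hl : l ≤ 𝓝 1)
    (hβ : Summable fun n => massPow (p n) β) (hlβ : ∀ᶠ α in l, β ≤ α) :
    Tendsto (fun α => ∑' n, massPow (p n) α) l (𝓝 1) := by
  have hlim : ∀ n, Tendsto (massPow (p n)) l (𝓝 (massPow (p n) 1)) := fun n =>
    (hasDerivAt_massPow (hp.1 n)).continuousAt.tendsto.mono_left hl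
  have hbound : ∀ᶠ α in l, ∀ n, ‖massPow (p n) α‖ ≤ massPow (p n) β := by
    filter_upwards [hlβ] with α hα n
    rw [Real.norm_of_nonneg (massPow_nonneg (hp.1 n) α)]
    exact massPow_le_massPow_of_le (hp.1 n) (hp.le_one_s16 n) hα
  simpa [hp.2.tsum_eq] using tendsto_tsum_of_dominated_convergence hβ hlim hbound


lemma exists_summable_massPow_of_criticalExponent_lt_one (hp : IsProbDist p)
    (hc : criticalExponent p < 1) : ∃ β < 1, Summable fun n => massPow (p n) β := by
  have h₂ : (2 : ℝ) ∈ convRegion p := ⟨zero_le_two, (renyiEntropy_lt_top_iff (by norm_num)).2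
    ((renyiSum_ne_top_iff hp.1).2 (hp.summable_massPow_of_le hp.summable_massPow_one one_le_two))⟩
  obtain ⟨β, ⟨-, hβ⟩, hβ1⟩ := (csInf_lt_iff ⟨0, fun _ h => h.1⟩ ⟨2, h₂⟩).1 hc
  exact ⟨β, hβ1, (renyiSum_ne_top_iff hp.1).1 ((renyiEntropy_lt_top_iff hβ1.ne).1 hβ)⟩

theorem tendsto_renyiEntropy_of_tendsto_entropySlope (hp : IsProbDist p) {l : Filter ℝ}
    {L : ℝ≥0∞} (hl : l ≤ 𝓝[≠] 1) (hβ : Summable fun n => massPow (p n) β)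
    (hlβ : ∀ᶠ α in l, β ≤ α)
    (hΦ : Tendsto (fun α => ∑' n, ENNReal.ofReal (entropySlope (p n) α)) l (𝓝 L)) :
    Tendsto (renyiEntropy p) l (𝓝 L) := by
  have hl₁ : l ≤ 𝓝 1 := hl.trans nhdsWithin_le_nhds
  have hs : ∀ᶠ α in l, α ≠ 1 ∧ Summable fun n => massPow (p n) α := by
    filter_upwards [hl self_mem_nhdsWithin, hlβ] with α hα hβα
    exact ⟨hα, hp.summable_massPow_of_le hβ hβα⟩
  have hΦ' : Tendsto (fun α => ENNReal.ofReal ((1 - ∑' n, massPow (p n) α) / (α - 1))) l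
      (𝓝 L) := by
    refine hΦ.congr' ?_
    filter_upwards [hs] with α ⟨hα, hsα⟩
    rw [← (hp.hasSum_entropySlope hsα).tsum_eq, ENNReal.ofReal_tsum_of_nonneg
      (fun n => entropySlope_nonneg (hp.1 n) (hp.le_one_s16 n) hα) (hp.hasSum_entropySlope hsα).summable]
  have hΦS := ENNReal.tendsto_ofReal_div_of_tendsto_one hΦ' (hp.tendsto_tsum_massPow hl₁ hβ hlβ)
  refine tendsto_of_tendsto_of_tendsto_of_le_of_le' (by simpa only [min_self] using hΦ'.min hΦS)
    (by simpa only [max_self] using hΦ'.max hΦS) ?_ ?_ <;>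
    filter_upwards [hs] with α ⟨hα, hsα⟩ <;>
    have hmem := log_div_one_sub_mem_uIcc (hp.tsum_massPow_pos hsα) α <;>
    rw [renyiEntropy_eq_ofReal hp.1 hα hsα]
  · rw [← ENNReal.ofReal_mono.map_min]
    exact ENNReal.ofReal_le_ofReal hmem.1
  · rw [← ENNReal.ofReal_mono.map_max]
    exact ENNReal.ofReal_le_ofReal hmem.2

theorem tendsto_renyiEntropy_nhdsGT (hp : IsProbDist p) :
    Tendsto (renyiEntropy p) (𝓝[>] 1) (𝓝 (shannonEntropy p)) := by
  refine hp.tendsto_renyiEntropy_of_tendsto_entropySlope (nhdsWithin_mono _ fun _ h => ne_of_gt h)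
    hp.summable_massPow_one (eventually_nhdsWithin_of_forall fun _ h => le_of_lt h) ?_
  rw [shannonEntropy_eq_tsum]
  refine ENNReal.tendsto_tsum_of_tendsto_of_le (fun n => ENNReal.tendsto_ofReal
    ((tendsto_entropySlope (hp.1 n)).mono_left (nhdsWithin_mono _ fun _ h => ne_of_gt h))) ?_
  filter_upwards [self_mem_nhdsWithin] with α hα n
  exact ENNReal.ofReal_le_ofReal (entropySlope_le_negMulLog (hp.1 n) hα)

theorem tendsto_renyiEntropy_nhdsLT (hp : IsProbDist p) (hβ1 : β < 1)
    (hβ : Summable fun n => massPow (p n) β) :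
    Tendsto (renyiEntropy p) (𝓝[<] 1) (𝓝 (shannonEntropy p)) := by
  have hslope := (hp.hasSum_entropySlope hβ).summable
  have hnear : ∀ᶠ α in 𝓝[<] 1, β < α ∧ α < 1 := Ioo_mem_nhdsLT hβ1
  refine hp.tendsto_renyiEntropy_of_tendsto_entropySlope (nhdsWithin_mono _ fun _ h => ne_of_lt h)
    hβ (hnear.mono fun _ h => h.1.le) ?_
  have hdom : ∀ᶠ α in 𝓝[<] 1, ∀ n, ‖entropySlope (p n) α‖ ≤ entropySlope (p n) β := by
    filter_upwards [hnear] with α hα n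
    rw [Real.norm_of_nonneg (entropySlope_nonneg (hp.1 n) (hp.le_one_s16 n) hα.2.ne)]
    exact antitoneOn_entropySlope (hp.1 n) hβ1.ne hα.2.ne hα.1.le
  have hlim := tendsto_tsum_of_dominated_convergence hslope (fun n =>
    (tendsto_entropySlope (hp.1 n)).mono_left (nhdsWithin_mono _ fun _ h => ne_of_lt h)) hdom
  have hH : Summable fun n => negMulLog (p n) := hslope.of_nonneg_of_le
    (fun n => negMulLog_nonneg (hp.1 n) (hp.le_one_s16 n))
    (fun n => negMulLog_le_entropySlope (hp.1 n) hβ1)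
  rw [shannonEntropy_eq_tsum, ← ENNReal.ofReal_tsum_of_nonneg
    (fun n => negMulLog_nonneg (hp.1 n) (hp.le_one_s16 n)) hH]
  refine (ENNReal.tendsto_ofReal hlim).congr' ?_
  filter_upwards [hnear] with α hα
  exact ENNReal.ofReal_tsum_of_nonneg (fun n => entropySlope_nonneg (hp.1 n) (hp.le_one_s16 n) hα.2.ne)
    (hp.hasSum_entropySlope (hp.summable_massPow_of_le hβ hα.1.le)).summable

end IsProbDist

/-- `lim_{α→1+} H_α(P) = H₁(P)` (both sides possibly infinite);
moreover, if `α_c(P) < 1` then `lim_{α→1} H_α(P) = H₁(P)`. -/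
theorem stmt16 (p : ℕ → ℝ) (hp : IsProbDist p) :
    Tendsto (fun α : ℝ => renyiEntropy p α) (𝓝[>] 1) (𝓝 (renyiEntropy p 1)) ∧
    (criticalExponent p < 1 →
      Tendsto (fun α : ℝ => renyiEntropy p α) (𝓝[≠] 1)
        (𝓝 (renyiEntropy p 1))) := by
  have hH₁ : renyiEntropy p 1 = shannonEntropy p := if_pos rfl
  rw [hH₁]
  refine ⟨hp.tendsto_renyiEntropy_nhdsGT, fun hc => ?_⟩
  obtain ⟨β, hβ1, hβ⟩ := hp.exists_summable_massPow_of_criticalExponent_lt_one hc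
  rw [← nhdsLT_sup_nhdsGT]
  exact (hp.tendsto_renyiEntropy_nhdsLT hβ1 hβ).sup hp.tendsto_renyiEntropy_nhdsGT
end
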